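/- Let u, v be nonzero vectors in ℝ^p and let ũ = (u,1), ṽ = (v,1) ∈ ℝ^{p+1}. Suppose |⟨u,v⟩|/(‖u‖‖v‖) ≤ ε for some ε ≥ 0, and let T ≥ max(1/‖u‖², 1/‖v‖²). Then |⟨ũ,ṽ⟩/(‖ũ‖‖ṽ‖)| ≤ ε + (2ε + 1)T. -/

import Mathlib

noncomputable def append1 {p : ℕ} (u : EuclideanSpace ℝ (Fin p)) (t : ℝ) :
    WithLp 2 (EuclideanSpace ℝ (Fin p) × ℝ) :=
  (WithLp.equiv 2 (EuclideanSpace ℝ (Fin p) × ℝ)).symm (u, t)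

section append1

variable {p : ℕ} (u v : EuclideanSpace ℝ (Fin p))

theorem inner_append1 (s t : ℝ) :
    inner ℝ (append1 u s) (append1 v t) = inner ℝ u v + s * t := by
  simp [append1, WithLp.prod_inner_apply, mul_comm]

theorem norm_append1_sq (t : ℝ) : ‖append1 u t‖ ^ 2 = ‖u‖ ^ 2 + t ^ 2 := by
  simpa [append1] using WithLp.prod_norm_sq_eq_of_L2 (append1 u t)

theorem norm_le_norm_append1 (t : ℝ) : ‖u‖ ≤ ‖append1 u t‖ :=
  (pow_le_pow_iff_left₀ (norm_nonneg _) (norm_nonneg _) two_ne_zero).1 <| by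
    rw [norm_append1_sq]; nlinarith

end append1

theorem one_div_mul_le_max_one_div_sq {a b : ℝ} (ha : 0 < a) (hb : 0 < b) :
    1 / (a * b) ≤ max (1 / a ^ 2) (1 / b ^ 2) := by
  rcases le_total a b with h | h
  · exact (one_div_le_one_div_of_le (by positivity) (by nlinarith)).trans (le_max_left _ _)
  · exact (one_div_le_one_div_of_le (by positivity) (by nlinarith)).trans (le_max_right _ _)

/-- Appending the coordinate 1 raises the inner product by 1 and only increases the norms. -/
theorem abs_inner_div_norm_append1_le {p : ℕ} {u v : EuclideanSpace ℝ (Fin p)}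
    (hu : u ≠ 0) (hv : v ≠ 0) :
    |inner ℝ (append1 u 1) (append1 v 1) / (‖append1 u 1‖ * ‖append1 v 1‖)| ≤
      |inner ℝ u v| / (‖u‖ * ‖v‖) + 1 / (‖u‖ * ‖v‖) := by
  have hnorm : 0 < ‖u‖ * ‖v‖ := mul_pos (norm_pos_iff.2 hu) (norm_pos_iff.2 hv)
  have hnorm_le : ‖u‖ * ‖v‖ ≤ ‖append1 u 1‖ * ‖append1 v 1‖ :=
    mul_le_mul (norm_le_norm_append1 u 1) (norm_le_norm_append1 v 1) (norm_nonneg v)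
      (norm_nonneg _)
  calc |inner ℝ (append1 u 1) (append1 v 1) / (‖append1 u 1‖ * ‖append1 v 1‖)|
      = |inner ℝ u v + 1| / (‖append1 u 1‖ * ‖append1 v 1‖) := by
        rw [abs_div, abs_of_pos (hnorm.trans_le hnorm_le), inner_append1, mul_one]
    _ ≤ (|inner ℝ u v| + 1) / (‖u‖ * ‖v‖) :=
        div_le_div₀ (by positivity) ((abs_add_le _ _).trans_eq (by rw [abs_one])) hnorm hnorm_le
    _ = |inner ℝ u v| / (‖u‖ * ‖v‖) + 1 / (‖u‖ * ‖v‖) := add_div _ _ _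

theorem stmt_3 (p : ℕ) (u v : EuclideanSpace ℝ (Fin p)) (hu : u ≠ 0) (hv : v ≠ 0)
    (ε T : ℝ) (hε : 0 ≤ ε)
    (hcorr : |inner ℝ u v| / (‖u‖ * ‖v‖) ≤ ε)
    (hT : max (1 / ‖u‖ ^ 2) (1 / ‖v‖ ^ 2) ≤ T) :
    |(inner ℝ (append1 u 1) (append1 v 1) : ℝ) / (‖append1 u 1‖ * ‖append1 v 1‖)| ≤
      ε + (2 * ε + 1) * T := by
  have hTuv : 1 / (‖u‖ * ‖v‖) ≤ T :=
    (one_div_mul_le_max_one_div_sq (norm_pos_iff.2 hu) (norm_pos_iff.2 hv)).trans hT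
  have hT0 : 0 ≤ T := (one_div_nonneg.2 (by positivity)).trans hTuv
  calc _ ≤ |inner ℝ u v| / (‖u‖ * ‖v‖) + 1 / (‖u‖ * ‖v‖) := abs_inner_div_norm_append1_le hu hv
    _ ≤ ε + T := add_le_add hcorr hTuv
    _ ≤ ε + (2 * ε + 1) * T := by nlinarith
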